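/- In the water filling algorithm output, at most one compressor is in trim: all returned loads q_i satisfy q_i ∈ {0, q_i⁻, q_i⁺} except possibly one index j where q_j⁻ ≤ q_j ≤ q_j⁺. -/

import Mathlib

/-!
The fill phase leaves every compressor at `0` or at `q⁺`. The trim phase walks back through
the active compressors and lowers each to `q⁻` as long as the surplus covers `q⁺ - q⁻`; the
first one where it does not absorbs the whole remaining surplus and ends in `[q⁻, q⁺]`, after
which the surplus is `0` and no load changes any more.
-/

/-- First loop of the water filling algorithm: fill compressors to full capacity
in order while the remaining needed load is positive. -/
noncomputable def fillPhase : List (ℝ × ℝ) → ℝ → List ℝ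
  | [], _ => []
  | (_, qM) :: rest, need =>
      if 0 < need then qM :: fillPhase rest (need - qM)
      else 0 :: fillPhase rest need

/-- Second loop of the water filling algorithm, run on the reversed list of
(compressor, assigned load) pairs: while there is surplus, trim each active
compressor back by at most `q⁺ − q⁻`. -/
noncomputable def trimPhase : List ((ℝ × ℝ) × ℝ) → ℝ → List ℝ
  | [], _ => []
  | pq :: rest, s =>
      if 0 ≤ s ∧ pq.2 ≠ 0 then
        (pq.2 - min (pq.1.2 - pq.1.1) s) ::
          trimPhase rest (s - min (pq.1.2 - pq.1.1) s)
      else pq.2 :: trimPhase rest s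

/-- The water filling algorithm (Algorithm 1): greedy fill in order, then trim
in reverse order. -/
noncomputable def waterFill (comps : List (ℝ × ℝ)) (qin : ℝ) : List ℝ :=
  let q1 := fillPhase comps qin
  (trimPhase ((comps.zip q1).reverse) (q1.sum - qin)).reverse

theorem length_fillPhase (comps : List (ℝ × ℝ)) (need : ℝ) :
    (fillPhase comps need).length = comps.length := by
  induction comps generalizing need with
  | nil => rfl
  | cons c rest ih =>
    simp only [fillPhase]
    split <;> simp [ih]

theorem eq_zero_or_eq_snd_of_mem_zip_fillPhase {comps : List (ℝ × ℝ)} {need : ℝ}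
    {pq : (ℝ × ℝ) × ℝ} (h : pq ∈ comps.zip (fillPhase comps need)) :
    pq.2 = 0 ∨ pq.2 = pq.1.2 := by
  induction comps generalizing need with
  | nil => simp at h
  | cons c rest ih =>
    simp only [fillPhase] at h
    split at h <;> rcases List.mem_cons.1 h with rfl | h
    exacts [Or.inr rfl, ih h, Or.inl rfl, ih h]

theorem length_trimPhase (l : List ((ℝ × ℝ) × ℝ)) (s : ℝ) :
    (trimPhase l s).length = l.length := by
  induction l generalizing s with
  | nil => rfl
  | cons pq rest ih =>
    simp only [trimPhase]
    split <;> simp [ih]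

theorem trimPhase_zero {l : List ((ℝ × ℝ) × ℝ)} (h : ∀ pq ∈ l, pq.1.1 ≤ pq.1.2) :
    trimPhase l 0 = l.map Prod.snd := by
  induction l with
  | nil => rfl
  | cons pq rest ih =>
    have hmin : min (pq.1.2 - pq.1.1) 0 = 0 := min_eq_right (by linarith [h pq (by simp)])
    simp only [trimPhase, hmin, sub_zero, ite_self, List.map_cons,
      ih fun p hp => h p (List.mem_cons_of_mem _ hp)]

def AtMostOneInTrim (cs : List (ℝ × ℝ)) (xs : List ℝ) : Prop :=
  ∃ j : ℕ,
    (∀ i (h1 : i < cs.length) (h2 : i < xs.length), i ≠ j →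
      xs[i] = 0 ∨ xs[i] = cs[i].1 ∨ xs[i] = cs[i].2) ∧
    (∀ (h1 : j < cs.length) (h2 : j < xs.length),
      xs[j] = 0 ∨ (cs[j].1 ≤ xs[j] ∧ xs[j] ≤ cs[j].2))

namespace AtMostOneInTrim

variable {cs : List (ℝ × ℝ)} {xs : List ℝ} {c : ℝ × ℝ} {x : ℝ}

theorem cons (h : AtMostOneInTrim cs xs) (hx : x = 0 ∨ x = c.1 ∨ x = c.2) :
    AtMostOneInTrim (c :: cs) (x :: xs) := by
  obtain ⟨j, hother, hj⟩ := h
  refine ⟨j + 1, fun i h1 h2 hij => ?_, fun h1 h2 => hj _ _⟩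
  cases i with
  | zero => exact hx
  | succ i => exact hother i _ _ (by omega)

theorem cons_of_mem_Icc (hx : x ∈ Set.Icc c.1 c.2)
    (hxs : ∀ i (h1 : i < cs.length) (h2 : i < xs.length),
      xs[i] = 0 ∨ xs[i] = cs[i].1 ∨ xs[i] = cs[i].2) :
    AtMostOneInTrim (c :: cs) (x :: xs) := by
  refine ⟨0, fun i h1 h2 hi => ?_, fun _ _ => Or.inr hx⟩
  obtain ⟨i, rfl⟩ := Nat.exists_eq_succ_of_ne_zero hi
  exact hxs i _ _

theorem reverse (hlen : cs.length = xs.length) (h : AtMostOneInTrim cs xs) :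
    AtMostOneInTrim cs.reverse xs.reverse := by
  obtain ⟨j, hother, hj⟩ := h
  refine ⟨if j < cs.length then cs.length - 1 - j else cs.length,
    fun i h1 h2 hij => ?_, fun h1 h2 => ?_⟩
  · simp only [List.getElem_reverse, hlen]
    exact hother _ _ _ (by split_ifs at hij <;> simp at h1 <;> omega)
  · split_ifs at h1 h2 ⊢ with hjn
    · have hidx : cs.length - 1 - (cs.length - 1 - j) = j := by omega
      have hidx' : xs.length - 1 - (cs.length - 1 - j) = j := by omega
      simp only [List.getElem_reverse, hidx, hidx']
      exact hj hjn (hlen ▸ hjn)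
    · simp at h1

end AtMostOneInTrim

theorem atMostOneInTrim_trimPhase {l : List ((ℝ × ℝ) × ℝ)} (s : ℝ)
    (h : ∀ pq ∈ l, pq.1.1 ≤ pq.1.2 ∧ (pq.2 = 0 ∨ pq.2 = pq.1.2)) :
    AtMostOneInTrim (l.map Prod.fst) (trimPhase l s) := by
  induction l generalizing s with
  | nil => exact ⟨0, fun _ h1 => by simp at h1, fun h1 => by simp at h1⟩
  | cons pq rest ih =>
    obtain ⟨⟨qmin, qmax⟩, load⟩ := pq
    obtain ⟨⟨-, hload⟩, hrest⟩ := List.forall_mem_cons.1 h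
    simp only at hload
    simp only [trimPhase, List.map_cons]
    split_ifs with hactive
    · obtain ⟨hs, hon⟩ := hactive
      obtain rfl : qmax = load := (hload.resolve_left hon).symm
      rcases le_total (qmax - qmin) s with hfull | hpartial
      · rw [min_eq_left hfull]
        exact (ih _ hrest).cons (by simp)
      · -- the surplus is used up here, so all later compressors keep their filled loads
        rw [min_eq_right hpartial, sub_self, trimPhase_zero fun p hp => (hrest p hp).1]
        refine .cons_of_mem_Icc ⟨by simp only; linarith, by simp only; linarith⟩ ?_
        intro i _ _
        simp only [List.getElem_map]
        exact (hrest _ (List.getElem_mem _)).2.imp id Or.inr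
    · exact (ih s hrest).cons (by simp only; tauto)

theorem stmt_14_general (comps : List (ℝ × ℝ)) (qin : ℝ)
    (hcap : ∀ p ∈ comps, 0 < p.1 ∧ p.1 ≤ p.2) :
    ∃ j : ℕ,
      (∀ i (h1 : i < comps.length) (h2 : i < (waterFill comps qin).length),
        i ≠ j →
          (waterFill comps qin)[i] = 0 ∨
          (waterFill comps qin)[i] = comps[i].1 ∨
          (waterFill comps qin)[i] = comps[i].2) ∧
      (∀ (h1 : j < comps.length) (h2 : j < (waterFill comps qin).length),
        (waterFill comps qin)[j] = 0 ∨
        (comps[j].1 ≤ (waterFill comps qin)[j] ∧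
          (waterFill comps qin)[j] ≤ comps[j].2)) := by
  have hloads : ∀ pq ∈ (comps.zip (fillPhase comps qin)).reverse,
      pq.1.1 ≤ pq.1.2 ∧ (pq.2 = 0 ∨ pq.2 = pq.1.2) := by
    intro pq hpq
    rw [List.mem_reverse] at hpq
    exact ⟨(hcap pq.1 (List.of_mem_zip hpq).1).2, eq_zero_or_eq_snd_of_mem_zip_fillPhase hpq⟩
  have htrim := atMostOneInTrim_trimPhase ((fillPhase comps qin).sum - qin) hloads
  rw [List.map_reverse, List.map_fst_zip (length_fillPhase comps qin).ge] at htrim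
  have hlen : comps.reverse.length = (trimPhase (comps.zip (fillPhase comps qin)).reverse
      ((fillPhase comps qin).sum - qin)).length := by
    simp [length_trimPhase, length_fillPhase]
  have hout := htrim.reverse hlen
  rwa [List.reverse_reverse] at hout

/-- In the water filling algorithm output, at most one compressor is in trim: all
loads are in `{0, q_i⁻, q_i⁺}` except possibly one index `j`,
where `q_j⁻ ≤ q_j ≤ q_j⁺` (or `q_j = 0`). -/
theorem stmt_14 (comps : List (ℝ × ℝ)) (qin : ℝ)
    (hcap : ∀ p ∈ comps, 0 < p.1 ∧ p.1 ≤ p.2)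
    (hlow : ∃ p ∈ comps, p.1 ≤ qin)
    (hhigh : qin ≤ (comps.map Prod.snd).sum) :
    ∃ j : ℕ,
      (∀ i (h1 : i < comps.length) (h2 : i < (waterFill comps qin).length),
        i ≠ j →
          (waterFill comps qin)[i] = 0 ∨
          (waterFill comps qin)[i] = comps[i].1 ∨
          (waterFill comps qin)[i] = comps[i].2) ∧
      (∀ (h1 : j < comps.length) (h2 : j < (waterFill comps qin).length),
        (waterFill comps qin)[j] = 0 ∨
        (comps[j].1 ≤ (waterFill comps qin)[j] ∧
          (waterFill comps qin)[j] ≤ comps[j].2)) :=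
  stmt_14_general comps qin hcap
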